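/- With the hypotheses of the previous statement (finite-dimensional module V, K_0, K_1 invertible, q not a root of unity), the operators Z_1 and Z̃_1 acting on V are nilpotent. -/
import Mathlib

lemma aux_nilp {V : Type*} [AddCommGroup V] [Module ℂ V] [FiniteDimensional ℂ V]
    (c : ℂ) (hc : ∀ n : ℕ, 0 < n → c ^ n ≠ 1)
    (K X : Module.End ℂ V) (hK : IsUnit K) (h : K * X = c • (X * K)) :
    IsNilpotent X := by
  obtain ⟨u, rfl⟩ := hK
  by_cases hc0 : c = 0
  · refine ⟨1, ?_⟩
    have : (↑u⁻¹ : Module.End ℂ V) * (↑u * X) = 0 := by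
      rw [h, hc0]; simp
    simpa [← mul_assoc] using this
  -- conjugation endomorphism on End V
  set φ : Module.End ℂ (Module.End ℂ V) :=
    (LinearMap.mulRight ℂ (↑u⁻¹ : Module.End ℂ V)).comp (LinearMap.mulLeft ℂ (↑u : Module.End ℂ V))
    with hφ
  have key : ∀ n : ℕ, (↑u : Module.End ℂ V) * X ^ n = c ^ n • (X ^ n * ↑u) := by
    intro n
    induction n with
    | zero => simp
    | succ n ih =>
      rw [pow_succ, ← mul_assoc, ih, smul_mul_assoc, mul_assoc, h, mul_smul_comm,
        smul_smul, ← mul_assoc, ← pow_succ]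
  have eig : ∀ n : ℕ, φ (X ^ n) = c ^ n • X ^ n := by
    intro n
    simp only [hφ, LinearMap.comp_apply, LinearMap.mulLeft_apply, LinearMap.mulRight_apply]
    rw [key n, smul_mul_assoc, mul_assoc]
    simp
  by_contra hnil
  have hXn : ∀ n : ℕ, X ^ n ≠ 0 := fun n hn => hnil ⟨n, hn⟩
  have hev : ∀ n : ℕ, φ.HasEigenvalue (c ^ n) := fun n =>
    Module.End.hasEigenvalue_of_hasEigenvector ⟨by
      rw [Module.End.mem_eigenspace_iff]; exact eig n, hXn n⟩
  have hinj : Function.Injective fun n : ℕ => c ^ n := by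
    intro m n hmn
    simp only at hmn
    by_contra hne
    wlog hlt : m < n generalizing m n
    · exact this hmn.symm (Ne.symm hne) (by omega)
    have h1 : c ^ m * c ^ (n - m) = c ^ m * 1 := by
      rw [mul_one, ← pow_add, Nat.add_sub_cancel' hlt.le]; exact hmn.symm
    exact hc (n - m) (by omega) (mul_left_cancel₀ (pow_ne_zero _ hc0) h1)
  have hfin : Set.Finite (Set.range fun n : ℕ => c ^ n) :=
    φ.finite_hasEigenvalue.subset (by rintro _ ⟨n, rfl⟩; exact hev n)
  exact Set.infinite_range_of_injective hinj hfin

/-- In a finite-dimensional module for the augmented `q`-Onsager algebra on which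
`K₀, K₁` act invertibly and `q` is not a root of unity, `Z₁` and `Z̃₁` act as
nilpotent operators. -/
theorem stmt_16 {V : Type*} [AddCommGroup V] [Module ℂ V] [FiniteDimensional ℂ V]
    (q : ℂ) (hq : q ≠ 0) (hroot : ∀ n : ℕ, 0 < n → q ^ n ≠ 1)
    (K0 K1 Z1 Zt1 : Module.End ℂ V)
    (hK0 : IsUnit K0) (hK1 : IsUnit K1)
    (hcomm : K0 * K1 = K1 * K0)
    (h1 : K0 * Z1 = q⁻¹ ^ 2 • (Z1 * K0))
    (h2 : K0 * Zt1 = q ^ 2 • (Zt1 * K0))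
    (h3 : K1 * Z1 = q ^ 2 • (Z1 * K1))
    (h4 : K1 * Zt1 = q⁻¹ ^ 2 • (Zt1 * K1)) :
    IsNilpotent Z1 ∧ IsNilpotent Zt1 := by
  constructor
  · refine aux_nilp (q ^ 2) ?_ K1 Z1 hK1 h3
    intro n hn h
    rw [← pow_mul] at h
    exact hroot (2 * n) (by omega) h
  · refine aux_nilp (q ^ 2) ?_ K0 Zt1 hK0 h2
    intro n hn h
    rw [← pow_mul] at h
    exact hroot (2 * n) (by omega) h
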